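/- Let 0 < ε < 1 and let P be analytic on the sector S_ε = {z ∈ ℂ : z ≠ 0, |arg z| < (π/2)(1+ε)}. If there exist constants M > 0 and a > 0 such that |P(z)| ≤ M e^{-a|z|} for all z ∈ S_ε, then P(z) = 0 for all z ∈ S_ε. -/

import Mathlib

/-!
Pull `P` back along `w ↦ (w + 1) ^ β` with `1 < β < 1 + ε`. This map sends the closed right
half-plane into the sector (its opening `βπ` is less than `(1 + ε)π`), so the pull-back is
holomorphic up to the boundary, bounded, and on the positive real axis it is at most
`M exp (-a x ^ β)`, which decays faster than any exponential. By Phragmén–Lindelöf the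
pull-back vanishes, so `P` vanishes on `[1, ∞)` and hence, by the identity theorem, on the
connected sector.
-/

open Complex Filter Set Topology Asymptotics
open scoped Real

theorem superpolynomialDecay_exp_neg_mul_rpow {a β : ℝ} (ha : 0 < a) (hβ : 1 < β) :
    SuperpolynomialDecay atTop Real.exp fun x => Real.exp (-a * x ^ β) := by
  intro n
  have hexponent : Tendsto (fun x : ℝ => x ^ β * (-a + n * x ^ (-(β - 1)))) atTop atBot := by
    refine (tendsto_rpow_atTop (by linarith)).atTop_mul_neg (neg_lt_zero.2 ha) ?_
    simpa using tendsto_const_nhds.add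
      ((tendsto_rpow_neg_atTop (by linarith : 0 < β - 1)).const_mul (n : ℝ))
  refine (Real.tendsto_exp_atBot.comp hexponent).congr' ?_
  filter_upwards [eventually_gt_atTop 0] with x hx
  rw [Function.comp_apply, ← Real.exp_nat_mul, ← Real.exp_add, mul_add, mul_left_comm,
    ← Real.rpow_add hx, show β + -(β - 1) = 1 by ring, Real.rpow_one]
  ring_nf

namespace Complex

def sector (θ : ℝ) : Set ℂ := {z | z ≠ 0 ∧ |arg z| < θ}

variable {θ : ℝ}

theorem sector_eq_slitPlane_inter (hθ : θ ≤ π) :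
    sector θ = slitPlane ∩ (fun z => |arg z|) ⁻¹' Iio θ := by
  ext z
  simp only [sector, mem_ofPred_eq, mem_inter_iff, mem_preimage, mem_Iio, mem_slitPlane_iff_arg]
  constructor
  · rintro ⟨hz, harg⟩
    refine ⟨⟨fun h => ?_, hz⟩, harg⟩
    rw [h, abs_of_pos Real.pi_pos] at harg
    linarith
  · rintro ⟨⟨-, hz⟩, harg⟩
    exact ⟨hz, harg⟩

theorem isOpen_sector (hθ : θ ≤ π) : IsOpen (sector θ) := by
  rw [sector_eq_slitPlane_inter hθ]
  exact continuousOn_arg.abs.isOpen_inter_preimage isOpen_slitPlane isOpen_Iio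

theorem sector_eq_image_polar (hθ : θ ≤ π) :
    sector θ = (fun p : ℝ × ℝ => (p.1 : ℂ) * exp (p.2 * I)) '' Ioi 0 ×ˢ Ioo (-θ) θ := by
  ext z
  constructor
  · rintro ⟨hz, harg⟩
    exact ⟨(‖z‖, arg z), ⟨norm_pos_iff.2 hz, abs_lt.1 harg⟩, norm_mul_exp_arg_mul_I z⟩
  · rintro ⟨⟨r, t⟩, ⟨hr : 0 < r, ht⟩, rfl⟩
    refine ⟨mul_ne_zero (ofReal_ne_zero.2 hr.ne') (exp_ne_zero _), ?_⟩
    rw [arg_real_mul _ hr, arg_exp_mul_I,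
      (toIocMod_eq_self _).2 ⟨by linarith [ht.1], by linarith [ht.2]⟩]
    exact abs_lt.2 ht

theorem isPreconnected_sector (hθ : θ ≤ π) : IsPreconnected (sector θ) := by
  rw [sector_eq_image_polar hθ]
  exact (isPreconnected_Ioi.prod isPreconnected_Ioo).image _ (by fun_prop)

theorem arg_cpow_ofReal {u : ℂ} (hu : u ≠ 0) {β : ℝ} (h : arg u * β ∈ Ioc (-π) π) :
    arg (u ^ (β : ℂ)) = arg u * β := by
  rw [cpow_def_of_ne_zero hu, arg_exp,
    (toIocMod_eq_self _).2 (by simpa [log_im, two_mul] using h)]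
  simp [log_im]

theorem cpow_mem_sector {u : ℂ} (hu : 0 < u.re) {β : ℝ} (hβ : 0 < β) (hβθ : β * (π / 2) ≤ θ)
    (hθ : θ ≤ π) : u ^ (β : ℂ) ∈ sector θ := by
  have hu0 : u ≠ 0 := fun h => by simp [h] at hu
  have harg : |arg u * β| < θ := by
    rw [abs_mul, abs_of_pos hβ]
    nlinarith [abs_arg_lt_pi_div_two_iff.2 (Or.inl hu)]
  refine ⟨fun h => hu0 ((cpow_eq_zero_iff _ _).1 h).1, ?_⟩
  rwa [arg_cpow_ofReal hu0 ⟨by linarith [abs_lt.1 harg], by linarith [abs_lt.1 harg]⟩]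

theorem frequently_nhdsNE_ofReal {p : ℂ → Prop} {x₀ : ℝ} (h : ∀ᶠ x : ℝ in 𝓝 x₀, p x) :
    ∃ᶠ z in 𝓝[≠] (x₀ : ℂ), p z := by
  have hofReal : Tendsto ((↑) : ℝ → ℂ) (𝓝[≠] x₀) (𝓝[≠] (x₀ : ℂ)) :=
    continuous_ofReal.continuousWithinAt.tendsto_nhdsWithin fun _ hx => ofReal_injective.ne hx
  exact hofReal.frequently (eventually_nhdsWithin_of_eventually_nhds h).frequently

theorem eq_zero_of_one_le_of_eqOn_zero_comp_cpow {α : Type*} [Zero α] {P : ℂ → α} {β : ℝ}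
    (hβ : 0 < β)
    (h : EqOn (fun w => P ((w + 1) ^ (β : ℂ))) 0 {w | 0 ≤ w.re}) {x : ℝ} (hx : 1 ≤ x) :
    P x = 0 := by
  have hroot : 1 ≤ x ^ β⁻¹ := Real.one_le_rpow hx (by positivity)
  have : P ((((x ^ β⁻¹ - 1 : ℝ) : ℂ) + 1) ^ (β : ℂ)) = 0 := h (by simpa using hroot)
  rwa [ofReal_sub, ofReal_one, sub_add_cancel, ← ofReal_cpow (by linarith),
    Real.rpow_inv_rpow (by linarith) hβ.ne'] at this

section

variable {E : Type*} [NormedAddCommGroup E] [NormedSpace ℂ E]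

theorem eqOn_zero_of_bounded_of_exp_neg_rpow_decay {f : ℂ → E} {C M a β : ℝ}
    (hd : DiffContOnCl ℂ f {z | 0 < z.re}) (hC : ∀ z : ℂ, 0 ≤ z.re → ‖f z‖ ≤ C)
    (ha : 0 < a) (hβ : 1 < β) (hdecay : ∀ x : ℝ, 0 ≤ x → ‖f x‖ ≤ M * Real.exp (-a * x ^ β)) :
    EqOn f 0 {z | 0 ≤ z.re} := by
  refine PhragmenLindelof.eq_zero_on_right_half_plane_of_superexponential_decay hd
    ⟨0, two_pos, 0, IsBigO.of_bound C ?_⟩ ?_ ⟨C, fun y => hC _ (by simp)⟩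
  · filter_upwards [mem_inf_of_right (mem_principal_self _)] with z (hz : 0 < z.re)
    simpa using hC z hz.le
  · exact SuperpolynomialDecay.trans_eventuallyLE
      (Eventually.of_forall fun _ => (Real.exp_pos _).le) (superpolynomialDecay_zero _ _)
      ((superpolynomialDecay_exp_neg_mul_rpow ha hβ).const_mul M)
      (Eventually.of_forall fun _ => norm_nonneg _)
      (by filter_upwards [eventually_ge_atTop 0] with x hx using hdecay x hx)

theorem eqOn_zero_comp_cpow_of_norm_le_exp {P : ℂ → E} {β M a : ℝ} (hθ : θ ≤ π)
    (hβ : 1 < β) (hβθ : β * (π / 2) ≤ θ) (hP : DifferentiableOn ℂ P (sector θ)) (hM : 0 ≤ M)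
    (ha : 0 < a) (hbound : ∀ z ∈ sector θ, ‖P z‖ ≤ M * Real.exp (-a * ‖z‖)) :
    EqOn (fun w => P ((w + 1) ^ (β : ℂ))) 0 {w | 0 ≤ w.re} := by
  have hre : ∀ w : ℂ, 0 ≤ w.re → 0 < (w + 1).re := fun w hw => by
    rw [add_re, one_re]; linarith
  have hmem : ∀ w : ℂ, 0 ≤ w.re → (w + 1) ^ (β : ℂ) ∈ sector θ := fun w hw =>
    cpow_mem_sector (hre w hw) (by linarith) hβθ hθ
  have hnorm : ∀ w : ℂ, 0 ≤ w.re →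
      ‖P ((w + 1) ^ (β : ℂ))‖ ≤ M * Real.exp (-a * ‖w + 1‖ ^ β) := fun w hw => by
    simpa only [norm_cpow_real] using hbound _ (hmem w hw)
  have hdiff : DiffContOnCl ℂ (fun w => P ((w + 1) ^ (β : ℂ))) {w | 0 < w.re} := by
    refine DifferentiableOn.diffContOnCl fun w hw => ?_
    rw [closure_setOfPred_lt_re] at hw
    have hcpow : DifferentiableAt ℂ (fun w : ℂ => (w + 1) ^ (β : ℂ)) w :=
      (differentiableAt_id.add_const 1).cpow_const (Or.inl (hre w hw))
    exact ((hP.differentiableAt ((isOpen_sector hθ).mem_nhds (hmem w hw))).comp w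
      hcpow).differentiableWithinAt
  have hbdd : ∀ w : ℂ, 0 ≤ w.re → ‖P ((w + 1) ^ (β : ℂ))‖ ≤ M := fun w hw => by
    refine (hnorm w hw).trans (mul_le_of_le_one_right hM (Real.exp_le_one_iff.2 ?_))
    have := Real.rpow_nonneg (norm_nonneg (w + 1)) β
    nlinarith
  have hdecay : ∀ x : ℝ, 0 ≤ x → ‖P (((x : ℂ) + 1) ^ (β : ℂ))‖ ≤ M * Real.exp (-a * x ^ β) :=
    fun x hx => by
      have hx1 : ‖(x : ℂ) + 1‖ = x + 1 := by
        rw [← ofReal_one, ← ofReal_add, norm_real, Real.norm_of_nonneg (by linarith)]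
      have : x ^ β ≤ ‖(x : ℂ) + 1‖ ^ β := by rw [hx1]; gcongr; linarith
      exact (hnorm x (by simpa using hx)).trans
        (mul_le_mul_of_nonneg_left (Real.exp_le_exp.2 (by nlinarith)) hM)
  exact eqOn_zero_of_bounded_of_exp_neg_rpow_decay hdiff hbdd ha hβ hdecay

end

end Complex

/-- **Lemma 1.** Let `0 < ε < 1` and let `P` be analytic on the sector
`S_ε = {z ≠ 0 : |arg z| < (π/2)(1+ε)}`. If `|P(z)| ≤ M e^{-a|z|}` on `S_ε`
for some `M, a > 0`, then `P ≡ 0` on `S_ε`. -/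
theorem exp_decay_on_sector_opening_gt_pi_eq_zero
    (ε : ℝ) (hε0 : 0 < ε) (hε1 : ε < 1)
    (P : ℂ → ℂ)
    (hP : DifferentiableOn ℂ P {z : ℂ | z ≠ 0 ∧ |z.arg| < Real.pi / 2 * (1 + ε)})
    (M a : ℝ) (hM : 0 < M) (ha : 0 < a)
    (hbound : ∀ z : ℂ, z ≠ 0 → |z.arg| < Real.pi / 2 * (1 + ε) →
      ‖P z‖ ≤ M * Real.exp (-a * ‖z‖)) :
    ∀ z : ℂ, z ≠ 0 → |z.arg| < Real.pi / 2 * (1 + ε) → P z = 0 := by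
  have hθ : π / 2 * (1 + ε) ≤ π := by nlinarith [Real.pi_pos]
  have hβθ : (1 + ε / 2) * (π / 2) ≤ π / 2 * (1 + ε) := by nlinarith [Real.pi_pos]
  have hcomp := eqOn_zero_comp_cpow_of_norm_le_exp hθ (by linarith) hβθ hP hM.le ha
    fun z hz => hbound z hz.1 hz.2
  have hfreq : ∃ᶠ z in 𝓝[≠] ((2 : ℝ) : ℂ), P z = 0 := frequently_nhdsNE_ofReal <|
    (eventually_ge_nhds one_lt_two).mono fun x hx =>
      eq_zero_of_one_le_of_eqOn_zero_comp_cpow (by linarith) hcomp hx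
  have h2 : ((2 : ℝ) : ℂ) ∈ sector (π / 2 * (1 + ε)) :=
    ⟨by norm_num, by rw [arg_ofReal_of_nonneg zero_le_two, abs_zero]; positivity⟩
  intro z hz harg
  exact (hP.analyticOnNhd (isOpen_sector hθ)).eqOn_zero_of_preconnected_of_frequently_eq_zero
    (isPreconnected_sector hθ) h2 hfreq ⟨hz, harg⟩
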